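/- arXiv:2101.07247 — 2 statements merged into one kernel-verified Lean document; each statement's English description precedes it below -/
import Mathlib

section
/- Every direction of a graph G that is countably determined in G is induced by a ray of G all of whose finite initial segments X yield directional choices (X, f(X)) that together distinguish f from every other direction of G. -/
/-! Common definitions: rays, ends (à la Halin), the end space, directions
(via Mathlib's `SimpleGraph.end`), domination, generalised paths, etc. -/

open Classical SimpleGraph

universe u

variable {V : Type u}

/-- A ray in `G`: a one-way infinite path. -/
structure Ray (G : SimpleGraph V) where
  f : ℕ → V
  inj : Function.Injective f
  adj : ∀ n, G.Adj (f n) (f (n + 1))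

namespace Ray

variable {G : SimpleGraph V}

/-- `R` has a tail inside the vertex set `S`. -/
def TailIn (R : Ray G) (S : Set V) : Prop :=
  ∃ N, ∀ n, N ≤ n → R.f n ∈ S

/-- The set of the first `n` vertices of `R`. -/
noncomputable def initSeg (R : Ray G) (n : ℕ) : Finset V :=
  (Finset.range n).image R.f

end Ray

/-- Two rays are equivalent if no finite vertex set separates them, i.e. for
every finite `X` they have tails in a common component of `G - X`. -/
def RayEquiv (G : SimpleGraph V) (R S : Ray G) : Prop :=
  ∀ X : Finset V, ∃ C : G.ComponentCompl (X : Set V), R.TailIn C ∧ S.TailIn C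

/-- The ends of `G` in the sense of Halin: equivalence classes of rays. -/
def Ends (G : SimpleGraph V) : Type u :=
  { ω : Set (Ray G) // ∃ R : Ray G, ω = { S | RayEquiv G R S } }

/-- The end of a ray. -/
def Ray.end (G : SimpleGraph V) (R : Ray G) : Ends G :=
  ⟨{ S | RayEquiv G R S }, R, rfl⟩

/-- The end `ω` lives in the component `C` of `G - X`:  every ray in `ω` has a
tail in `C`.  (For genuine ends this is the statement `C = C(X,ω)`.) -/
def LivesIn {G : SimpleGraph V} (ω : Ends G) (X : Finset V)
    (C : G.ComponentCompl (X : Set V)) : Prop :=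
  ∀ R ∈ ω.1, R.TailIn C

/-- The basic open set `Ω(X,C)` of the end space. -/
def basicSet (G : SimpleGraph V) (X : Finset V) (C : G.ComponentCompl (X : Set V)) :
    Set (Ends G) :=
  { ω | LivesIn ω X C }

/-- The end space: the topology on `Ends G` generated by the sets `Ω(X,C)`. -/
instance endsTopology (G : SimpleGraph V) : TopologicalSpace (Ends G) :=
  TopologicalSpace.generateFrom
    { U | ∃ (X : Finset V) (C : G.ComponentCompl (X : Set V)), U = basicSet G X C }

section Directions

/-- The component `f(X)` chosen by the direction `f` at the finite vertex set `X`. -/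
def dirComp {G : SimpleGraph V} (f : G.end) (X : Finset V) : G.ComponentCompl (X : Set V) :=
  f.1 (Opposite.op X)


variable (G : SimpleGraph V)

/-- The ray `R` induces the direction `f` (i.e. `f = f_ω` for the end `ω` of `R`):
for every finite `X`, the component `f(X)` contains a tail of `R`. -/
def InducesDir {G : SimpleGraph V} (R : Ray G) (f : G.end) : Prop :=
  ∀ X : Finset V, R.TailIn (dirComp f X : Set V)

/-- The end `ω` induces the direction `f`, i.e. `f = f_ω`. -/
def EndInducesDir {G : SimpleGraph V} (ω : Ends G) (f : G.end) : Prop :=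
  ∀ (X : Finset V), ∀ R ∈ ω.1, R.TailIn (dirComp f X : Set V)

/-- A direction `f` is countably determined in `G` if some countable set of
directional choices `(X, C)` distinguishes `f` from every other direction. -/
def DirCountablyDetermined {G : SimpleGraph V} (f : G.end) : Prop :=
  ∃ D : Set ((X : Finset V) × G.ComponentCompl (X : Set V)), D.Countable ∧
    ∀ h : G.end, h ≠ f → ∃ p ∈ D,
      dirComp f p.1 = p.2 ∧ dirComp h p.1 ≠ p.2

/-- `G` is countably determined: some countable set of directional choices
distinguishes every two distinct directions of `G` from each other. -/
def GraphCountablyDetermined (G : SimpleGraph V) : Prop :=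
  ∃ D : Set ((X : Finset V) × G.ComponentCompl (X : Set V)), D.Countable ∧
    ∀ f h : G.end, f ≠ h → ∃ p ∈ D,
      (dirComp f p.1 = p.2 ∧ dirComp h p.1 ≠ p.2) ∨
      (dirComp h p.1 = p.2 ∧ dirComp f p.1 ≠ p.2)

/-- `R` is directional in `G`: the directional choices given by the finite
initial segments of `R` distinguish the direction induced by `R` from every
other direction of `G`. -/
def Directional {G : SimpleGraph V} (R : Ray G) : Prop :=
  ∀ h : G.end, (∃ X : Finset V, ¬ R.TailIn (dirComp h X : Set V)) →
    ∃ n : ℕ, ¬ R.TailIn (dirComp h (R.initSeg n) : Set V)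

/-- `R` is topological in `G`: the basic open sets `Ω(X_n, ω)`, for `X_n` the
first `n` vertices of `R` and `ω` the end of `R`, form a neighbourhood base at
`ω` in the end space of `G`. -/
def Topological {G : SimpleGraph V} (R : Ray G) : Prop :=
  ∀ U : Set (Ends G), IsOpen U → R.end G ∈ U →
    ∃ (n : ℕ) (C : G.ComponentCompl (R.initSeg n : Set V)),
      LivesIn (R.end G) (R.initSeg n) C ∧ basicSet G (R.initSeg n) C ⊆ U

end Directions

section Domination

variable (G : SimpleGraph V)

/-- `v` dominates the ray `R`: no finite vertex set avoiding `v` separates `v`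
from `R` (equivalently, there is an infinite `v`–`R` fan). -/
def DominatesRay (v : V) (R : Ray G) : Prop :=
  ∀ X : Finset V, v ∉ X → ∃ (u : V) (W : G.Walk v u),
    (∃ n, R.f n = u) ∧ ∀ w ∈ W.support, w ∉ (X : Set V)

/-- `v` dominates the end `ω`. -/
def DominatesEnd (v : V) (ω : Ends G) : Prop :=
  ∀ R ∈ ω.1, DominatesRay G v R

end Domination

/-- A double ray in `G`. -/
structure DoubleRay (G : SimpleGraph V) where
  f : ℤ → V
  inj : Function.Injective f
  adj : ∀ n : ℤ, G.Adj (f n) (f (n + 1))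

namespace DoubleRay

variable {G : SimpleGraph V}

/-- The positive tail of `D` lies in the end `ω`. -/
def PosTailIn (D : DoubleRay G) (ω : Ends G) : Prop :=
  ∃ R ∈ ω.1, ∃ N : ℤ, ∀ n : ℕ, R.f n = D.f (N + n)

/-- The negative tail of `D` lies in the end `ω`. -/
def NegTailIn (D : DoubleRay G) (ω : Ends G) : Prop :=
  ∃ R ∈ ω.1, ∃ N : ℤ, ∀ n : ℕ, R.f n = D.f (N - n)

end DoubleRay

/-- `P` is (the vertex set of) a generalised path in `G` with endpoints
`ω₁ ≠ ω₂`. -/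
def IsGenPath (G : SimpleGraph V) (P : Set V) (ω₁ ω₂ : Ends G) : Prop :=
  (∃ D : DoubleRay G, P = Set.range D.f ∧
    ((D.PosTailIn ω₁ ∧ D.NegTailIn ω₂) ∨ (D.PosTailIn ω₂ ∧ D.NegTailIn ω₁))) ∨
  (∃ (u v : V) (W : G.Walk u v), W.IsPath ∧ P = { x | x ∈ W.support } ∧
    ((DominatesEnd G u ω₁ ∧ DominatesEnd G v ω₂) ∨
     (DominatesEnd G u ω₂ ∧ DominatesEnd G v ω₁))) ∨
  (∃ R : Ray G, P = Set.range R.f ∧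
    ((R ∈ ω₁.1 ∧ DominatesEnd G (R.f 0) ω₂) ∨
     (R ∈ ω₂.1 ∧ DominatesEnd G (R.f 0) ω₁)))

/-- A sun in `G` centred at `ω`: pairwise vertex-disjoint generalised paths
`(P i, {ω, leaf i})` with pairwise distinct leaves `leaf i ≠ ω`, where either
all the `P i` are double rays with one tail in `leaf i` and another in `ω`, or
all the `P i` are rays in `leaf i` whose first vertices dominate `ω`. -/
def IsSun (G : SimpleGraph V) (ω : Ends G) {I : Type*}
    (P : I → Set V) (leaf : I → Ends G) : Prop :=
  (∀ i j, i ≠ j → Disjoint (P i) (P j)) ∧ Function.Injective leaf ∧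
  (∀ i, leaf i ≠ ω) ∧
  ((∀ i, ∃ D : DoubleRay G, P i = Set.range D.f ∧
      ((D.PosTailIn (leaf i) ∧ D.NegTailIn ω) ∨
       (D.PosTailIn ω ∧ D.NegTailIn (leaf i)))) ∨
   (∀ i, ∃ R : Ray G, P i = Set.range R.f ∧ R ∈ (leaf i).1 ∧
      DominatesEnd G (R.f 0) ω))




/-! Enumerate the sets `X` of a countable family of directional choices determining `f`.
Grow a path so that each new vertex lies in the component that `f` chooses for the vertices
before it; such a path can always be extended, and walking inside that component towards a
vertex `t` reaches a stage at which `t` has been cut off from it. Doing this at stage `k` for the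
vertices of the `k`-th set gives a ray `R` such that every `X` is disjoint from `f(Rₙ)` for some
initial segment `Rₙ`. Since `f(Rₙ)` is connected, any direction agreeing with `f` on all `Rₙ`
agrees with `f` on every `X`, and therefore is `f`. Applied to the direction of `R` this shows
that `R` induces `f`; applied to any other direction it yields an `Rₙ` on which it differs
from `f`. -/

theorem List.exists_getElem_eq_of_isPrefix {α : Type*} {s : ℕ → List α}
    (hs : ∀ k, s k <+: s (k + 1)) (hlen : ∀ k, k < (s k).length) :
    ∃ v : ℕ → α, ∀ k i (hi : i < (s k).length), (s k)[i] = v i := by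
  have hmono {m k : ℕ} (h : m ≤ k) : s m <+: s k := by
    induction k, h using Nat.le_induction with
    | base => exact List.prefix_refl _
    | succ k _ ih => exact ih.trans (hs k)
  refine ⟨fun i => (s i)[i]'(hlen i), fun k i hi => ?_⟩
  rcases le_total i k with h | h
  · exact ((hmono h).getElem (hlen i)).symm
  · exact (hmono h).getElem hi

variable {G : SimpleGraph V}

namespace SimpleGraph.ComponentCompl

variable {K : Set V} {C : G.ComponentCompl K}

theorem eq_of_mem_of_mem {D : G.ComponentCompl K} {v : V} (hC : v ∈ C) (hD : v ∈ D) :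
    C = D := by
  by_contra hne
  exact Set.disjoint_left.mp (ComponentCompl.pairwise_disjoint hne) hC hD

theorem mem_of_walk {u v : V} (p : G.Walk u v) (hp : ∀ w ∈ p.support, w ∉ K) (hu : u ∈ C) :
    v ∈ C := by
  induction p with
  | nil => exact hu
  | cons hadj p ih =>
    exact ih (fun w hw => hp w (List.mem_cons_of_mem _ hw))
      (mem_of_adj _ _ hu (hp _ (List.mem_cons_of_mem _ p.start_mem_support)) hadj)

theorem exists_isPath {u v : V} (hu : u ∈ C) (hv : v ∈ C) :
    ∃ p : G.Walk u v, p.IsPath ∧ ∀ w ∈ p.support, w ∈ C := by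
  obtain ⟨hu', rfl⟩ := hu
  obtain ⟨hv', hvu⟩ := hv
  obtain ⟨q⟩ := ConnectedComponent.eq.mp hvu.symm
  refine ⟨(q.map (Embedding.induce (K : Set V)ᶜ).toHom).bypass, Walk.bypass_isPath _,
    fun w hw => ?_⟩
  obtain ⟨x, hx, rfl⟩ :=
    List.mem_map.mp (Walk.support_map _ _ ▸ Walk.support_bypass_subset_support _ hw)
  exact ⟨x.2, ConnectedComponent.eq.mpr ⟨q.takeUntil x hx⟩ |>.symm⟩

end SimpleGraph.ComponentCompl

section DirComp

variable (f : G.end)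

theorem dirComp_mono {X Y : Finset V} (h : X ⊆ Y) :
    (dirComp f Y : Set V) ⊆ dirComp f X := by
  have hY : (dirComp f Y).hom (Finset.coe_subset.mpr h) = dirComp f X :=
    f.2 (CategoryTheory.homOfLE h).op
  exact hY ▸ (dirComp f Y).subset_hom _

theorem dirComp_subset_of_disjoint {X Y : Finset V}
    (hXY : ∀ x ∈ X, x ∉ (dirComp f Y : Set V)) : (dirComp f Y : Set V) ⊆ dirComp f X := by
  intro y hy
  obtain ⟨z, hz⟩ := (dirComp f (X ∪ Y)).nonempty
  obtain ⟨p, -, hpY⟩ :=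
    ComponentCompl.exists_isPath (dirComp_mono f Finset.subset_union_right hz) hy
  exact ComponentCompl.mem_of_walk p (fun w hw hwX => hXY w hwX (hpY w hw))
    (dirComp_mono f Finset.subset_union_left hz)

theorem dirComp_eq_of_eq_of_disjoint {d : G.end} {X Y : Finset V}
    (hY : dirComp d Y = dirComp f Y) (hXY : ∀ x ∈ X, x ∉ (dirComp f Y : Set V)) :
    dirComp d X = dirComp f X := by
  obtain ⟨y, hy⟩ := (dirComp f Y).nonempty
  exact ComponentCompl.eq_of_mem_of_mem
    (dirComp_subset_of_disjoint d (hY ▸ hXY) (hY ▸ hy)) (dirComp_subset_of_disjoint f hXY hy)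

theorem exists_adj_mem_dirComp_insert {X : Finset V} {u : V} (hu : u ∈ (dirComp f X : Set V)) :
    ∃ w, G.Adj u w ∧ w ∈ (dirComp f (insert u X) : Set V) := by
  obtain ⟨z, hz⟩ := (dirComp f (insert u X)).nonempty
  obtain ⟨p, -, hpX⟩ :=
    ComponentCompl.exists_isPath (dirComp_mono f (Finset.subset_insert u X) hz) hu
  have hu' : u ∉ (dirComp f (insert u X) : Set V) := fun h =>
    ComponentCompl.notMem_of_mem h (by simp)
  obtain ⟨d, hd, hd₁, hd₂⟩ := p.exists_boundary_dart _ hz hu'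
  -- the walk can only leave the component `f (insert u X)` through `u`
  have hd₂u : d.snd = u := by
    by_contra hne
    refine hd₂ (ComponentCompl.mem_of_adj _ _ hd₁ ?_ d.adj)
    simpa [hne] using ComponentCompl.notMem_of_mem (hpX _ (p.dart_snd_mem_support_of_mem_darts hd))
  exact ⟨d.fst, hd₂u ▸ d.adj.symm, hd₁⟩

end DirComp

namespace Ray

variable (R : Ray G)

theorem tailIn_compl (X : Finset V) : R.TailIn (X : Set V)ᶜ := by
  have h := R.inj.tendsto_cofinite.eventually X.finite_toSet.compl_mem_cofinite
  rw [Nat.cofinite_eq_atTop] at h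
  exact Filter.eventually_atTop.mp h

theorem mem_componentCompl_of_le {K : Set V} {C : G.ComponentCompl K} {N : ℕ}
    (hK : ∀ n, N ≤ n → R.f n ∉ K) (hN : R.f N ∈ C) {n : ℕ} (hn : N ≤ n) : R.f n ∈ C := by
  induction n, hn using Nat.le_induction with
  | base => exact hN
  | succ n hn ih => exact ComponentCompl.mem_of_adj _ _ ih (hK _ (by omega)) (R.adj n)

variable {R}

theorem TailIn.eq_of_tailIn {K : Set V} {C D : G.ComponentCompl K} (hC : R.TailIn C)
    (hD : R.TailIn D) : C = D := by
  obtain ⟨M, hM⟩ := hC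
  obtain ⟨N, hN⟩ := hD
  exact ComponentCompl.eq_of_mem_of_mem (hM _ (le_max_left M N)) (hN _ (le_max_right M N))

variable (R)

noncomputable def tailComp (X : Finset V) : G.ComponentCompl (X : Set V) :=
  G.componentComplMk ((R.tailIn_compl X).choose_spec _ le_rfl)

theorem tailIn_tailComp (X : Finset V) : R.TailIn (R.tailComp X) :=
  ⟨_, fun _ =>
    R.mem_componentCompl_of_le (R.tailIn_compl X).choose_spec (G.componentComplMk_mem _)⟩

noncomputable def direction : G.end :=
  ⟨fun X => R.tailComp X.unop, fun {X Y} φ => by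
    obtain ⟨N, hN⟩ := R.tailIn_tailComp X.unop
    have hhom : R.TailIn ((R.tailComp X.unop).hom (CategoryTheory.le_of_op_hom φ)) :=
      ⟨N, fun n hn => ComponentCompl.subset_hom _ _ (hN n hn)⟩
    exact hhom.eq_of_tailIn (R.tailIn_tailComp Y.unop)⟩

theorem inducesDir_direction : InducesDir R R.direction :=
  R.tailIn_tailComp

theorem dirComp_direction {f : G.end} {X : Finset V} (h : R.TailIn (dirComp f X)) :
    dirComp R.direction X = dirComp f X :=
  (R.tailIn_tailComp X).eq_of_tailIn h

end Ray

def IsDirPath (f : G.end) (l : List V) : Prop :=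
  l.IsChain G.Adj ∧ ∀ l' v, l' ++ [v] <+: l → v ∈ (dirComp f l'.toFinset : Set V)

namespace IsDirPath

variable {f : G.end} {l : List V}

theorem nil : IsDirPath f [] :=
  ⟨List.isChain_nil, fun l' v h => by simpa using h.length_le⟩

theorem concat (hl : IsDirPath f l) {v : V} (hv : v ∈ (dirComp f l.toFinset : Set V))
    (hadj : ∀ u ∈ l.getLast?, G.Adj u v) : IsDirPath f (l ++ [v]) := by
  refine ⟨List.isChain_append.mpr ⟨hl.1, List.isChain_singleton v, by simpa using hadj⟩,
    fun l' w h => ?_⟩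
  rcases List.prefix_concat_iff.mp h with h | h
  · obtain ⟨rfl, rfl⟩ : l' = l ∧ w = v := by simpa using h
    exact hv
  · exact hl.2 l' w h

theorem exists_adj_mem (hl : IsDirPath f l) :
    ∃ v, (∀ u ∈ l.getLast?, G.Adj u v) ∧ v ∈ (dirComp f l.toFinset : Set V) := by
  rcases List.eq_nil_or_concat l with rfl | ⟨l, u, rfl⟩
  · obtain ⟨v, hv⟩ := (dirComp f ([] : List V).toFinset).nonempty
    exact ⟨v, by simp, hv⟩
  · rw [List.concat_eq_append] at hl ⊢
    obtain ⟨v, huv, hv⟩ := exists_adj_mem_dirComp_insert f (hl.2 l u (by simp))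
    refine ⟨v, by simpa using huv, ?_⟩
    have hlu : (l ++ [u]).toFinset = insert u l.toFinset := by ext; simp
    rwa [hlu]

theorem exists_extension_of_walk {w t : V} (p : G.Walk w t) (hl : IsDirPath f l)
    (hp : p.IsPath) (hpl : ∀ v ∈ p.support, v ∉ l) (hw : ∀ u ∈ l.getLast?, G.Adj u w) :
    ∃ l', l <+: l' ∧ IsDirPath f l' ∧ t ∉ (dirComp f l'.toFinset : Set V) := by
  induction p generalizing l with
  | @nil u =>
    by_cases hu : u ∈ (dirComp f l.toFinset : Set V)
    · exact ⟨_, List.prefix_append l [u], hl.concat hu hw,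
        fun h => ComponentCompl.notMem_of_mem h (by simp)⟩
    · exact ⟨l, List.prefix_refl l, hl, hu⟩
  | @cons u v t hadj p ih =>
    by_cases ht : t ∈ (dirComp f l.toFinset : Set V)
    swap
    · exact ⟨l, List.prefix_refl l, hl, ht⟩
    have hu : u ∈ (dirComp f l.toFinset : Set V) :=
      ComponentCompl.mem_of_walk (p.cons hadj).reverse
        (by simpa only [Walk.support_reverse, List.mem_reverse, Finset.mem_coe,
          List.mem_toFinset] using hpl) ht
    rw [Walk.support_cons, List.forall_mem_cons] at hpl
    rw [Walk.cons_isPath_iff] at hp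
    have hpu : ∀ x ∈ p.support, x ∉ l ++ [u] := fun x hx hxl =>
      (List.mem_append.mp hxl).elim (hpl.2 x hx) fun h => hp.2 (List.mem_singleton.mp h ▸ hx)
    obtain ⟨l', hll', hl'⟩ := ih (hl.concat hu hw) hp.1 hpu (by simpa using hadj)
    exact ⟨l', (List.prefix_append _ _).trans hll', hl'⟩

theorem exists_extension_notMem (hl : IsDirPath f l) (t : V) :
    ∃ l', l <+: l' ∧ IsDirPath f l' ∧ t ∉ (dirComp f l'.toFinset : Set V) := by
  by_cases ht : t ∈ (dirComp f l.toFinset : Set V)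
  swap
  · exact ⟨l, List.prefix_refl l, hl, ht⟩
  obtain ⟨w, hw, hwl⟩ := hl.exists_adj_mem
  obtain ⟨p, hp, hpl⟩ := ComponentCompl.exists_isPath hwl ht
  exact exists_extension_of_walk p hl hp
    (fun v hv hvl => ComponentCompl.notMem_of_mem (hpl v hv) (by simpa using hvl)) hw

theorem exists_extension (hl : IsDirPath f l) (X : Finset V) :
    ∃ l', l <+: l' ∧ l.length < l'.length ∧ IsDirPath f l' ∧
      ∀ x ∈ X, x ∉ (dirComp f l'.toFinset : Set V) := by
  induction X using Finset.induction_on with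
  | empty =>
    obtain ⟨w, hw, hwl⟩ := hl.exists_adj_mem
    exact ⟨l ++ [w], List.prefix_append l [w], by simp, hl.concat hwl hw, by simp⟩
  | insert x X _ ih =>
    obtain ⟨l₁, hll₁, hlen, hl₁, hX⟩ := ih
    obtain ⟨l₂, hl₁l₂, hl₂, hx⟩ := hl₁.exists_extension_notMem x
    have hsub : l₁.toFinset ⊆ l₂.toFinset := fun v hv =>
      List.mem_toFinset.mpr (hl₁l₂.subset (List.mem_toFinset.mp hv))
    refine ⟨l₂, hll₁.trans hl₁l₂, hlen.trans_le hl₁l₂.length_le, hl₂, ?_⟩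
    rintro y hy
    rcases Finset.mem_insert.mp hy with rfl | hy
    · exact hx
    · exact fun h => hX y hy (dirComp_mono f hsub h)

end IsDirPath

noncomputable def dirPathSeq (f : G.end) (A : ℕ → Finset V) :
    ℕ → {l : List V // IsDirPath f l}
  | 0 => ⟨[], IsDirPath.nil⟩
  | k + 1 => ⟨_, ((dirPathSeq f A k).2.exists_extension (A k)).choose_spec.2.2.1⟩

theorem dirPathSeq_succ (f : G.end) (A : ℕ → Finset V) (k : ℕ) :
    (dirPathSeq f A k).1 <+: (dirPathSeq f A (k + 1)).1 ∧
      (dirPathSeq f A k).1.length < (dirPathSeq f A (k + 1)).1.length ∧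
      ∀ x ∈ A k, x ∉ (dirComp f (dirPathSeq f A (k + 1)).1.toFinset : Set V) :=
  have h := ((dirPathSeq f A k).2.exists_extension (A k)).choose_spec
  ⟨h.1, h.2.1, h.2.2.2⟩

theorem exists_dirSeq_cutting_off (f : G.end) (A : ℕ → Finset V) :
    ∃ v : ℕ → V, (∀ n, G.Adj (v n) (v (n + 1))) ∧
      (∀ n, v n ∈ (dirComp f ((Finset.range n).image v) : Set V)) ∧
      ∀ k, ∃ n, ∀ x ∈ A k, x ∉ (dirComp f ((Finset.range n).image v) : Set V) := by
  set s := fun k => (dirPathSeq f A (k + 1)).1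
  have hlen (k : ℕ) : k < (s k).length := by
    induction k with
    | zero => exact (dirPathSeq_succ f A 0).2.1
    | succ k ih => exact (Nat.succ_le_of_lt ih).trans_lt (dirPathSeq_succ f A (k + 1)).2.1
  obtain ⟨v, hv⟩ :=
    List.exists_getElem_eq_of_isPrefix (s := s) (fun k => (dirPathSeq_succ f A (k + 1)).1) hlen
  have htake (k n : ℕ) (hn : n ≤ (s k).length) :
      ((s k).take n).toFinset = (Finset.range n).image v := by
    ext x
    simp only [List.mem_toFinset, List.mem_take_iff_getElem, Finset.mem_image,
      Finset.mem_range, lt_min_iff]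
    constructor
    · rintro ⟨i, hi, rfl⟩
      exact ⟨i, hi.1, (hv k i hi.2).symm⟩
    · rintro ⟨i, hi, rfl⟩
      exact ⟨i, ⟨hi, by omega⟩, hv k i (by omega)⟩
  refine ⟨v, fun n => ?_, fun n => ?_, fun k => ⟨(s k).length, fun x hx => ?_⟩⟩
  · rw [← hv (n + 1) n ((Nat.lt_succ_self n).trans (hlen _)), ← hv (n + 1) (n + 1) (hlen _)]
    exact (dirPathSeq f A (n + 2)).2.1.getElem n (hlen _)
  · rw [← hv n n (hlen n), ← htake n n (hlen n).le]
    refine (dirPathSeq f A (n + 1)).2.2 _ _ ?_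
    rw [List.take_append_getElem]
    exact List.take_prefix _ _
  · rw [← htake k _ le_rfl, List.take_length]
    exact (dirPathSeq_succ f A k).2.2 x hx

theorem exists_ray_cutting_off (f : G.end) (A : ℕ → Finset V) :
    ∃ R : Ray G, (∀ n, R.TailIn (dirComp f (R.initSeg n))) ∧
      ∀ k, ∃ n, ∀ x ∈ A k, x ∉ (dirComp f (R.initSeg n) : Set V) := by
  obtain ⟨v, hadj, hmem, hA⟩ := exists_dirSeq_cutting_off f A
  have hinj : Function.Injective v := by
    intro m n h
    by_contra hne
    wlog hmn : m < n generalizing m n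
    · exact this h.symm (Ne.symm hne) (by omega)
    exact ComponentCompl.notMem_of_mem (hmem n) (by simpa using ⟨m, hmn, h⟩)
  refine ⟨⟨v, hinj, hadj⟩, fun n => ⟨n, fun m hm => ?_⟩, hA⟩
  exact dirComp_mono f (Finset.image_subset_image (Finset.range_subset_range.mpr hm)) (hmem m)

/-- Every countably determined direction `f` of `G` is induced by a ray all of
whose finite initial segments `X` yield directional choices `(X, f(X))` that
together distinguish `f` from every other direction of `G`. -/
theorem stmt_4 {V : Type u} (G : SimpleGraph V) (f : G.end)
    (hf : DirCountablyDetermined f) :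
    ∃ R : Ray G, InducesDir R f ∧
      ∀ h : G.end, h ≠ f →
        ∃ n : ℕ, dirComp h (R.initSeg n) ≠ dirComp f (R.initSeg n) := by
  obtain ⟨D, hDc, hD⟩ := hf
  obtain ⟨A, hA⟩ := Set.countable_iff_exists_subset_range.mp (hDc.image Sigma.fst)
  obtain ⟨R, hRf, hRA⟩ := exists_ray_cutting_off f A
  have heq (d : G.end) (hd : ∀ n, dirComp d (R.initSeg n) = dirComp f (R.initSeg n)) :
      d = f := by
    by_contra hne
    obtain ⟨⟨X, C⟩, hXC, hfX, hdX⟩ := hD d hne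
    obtain ⟨k, rfl⟩ := hA (Set.mem_image_of_mem Sigma.fst hXC)
    obtain ⟨n, hn⟩ := hRA k
    exact hdX ((dirComp_eq_of_eq_of_disjoint f (hd n) hn).trans hfX)
  refine ⟨R, heq R.direction (fun n => R.dirComp_direction (hRf n)) ▸ R.inducesDir_direction,
    fun h hne => ?_⟩
  by_contra! hh
  exact hne (heq h hh)
end

section
/- End spaces of graphs are strong Fréchet–Urysohn: for every graph G, every sequence of subsets A₀, A₁, … of Ω(G), and every end ω lying in the closure of every A_n, there exist ends ω_n ∈ A_n with ω_n → ω in Ω(G). -/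
/-! Common definitions: rays, ends (à la Halin), the end space, directions
(via Mathlib's `SimpleGraph.end`), domination, generalised paths, etc. -/

open Classical SimpleGraph

universe u

variable {V : Type u}

/-! If the ends `a` and `ω` live in the same component `C` of `G - Z`, then a tail of a ray
in `ω`, a tail of a ray in `a` and a path joining them inside `C` form a countable set
`S ⊆ C` that every finite `X` separating `a` from `ω` must meet. Given `ω ∈ closure (A n)`
for all `n`, choose finite sets `Z n` diagonally, so that `Z n` contains the first `n`
vertices (in fixed enumerations) of the sets `S k`, `k < n`, where `S k` belongs to an end
`x k ∈ A k` living in the component of `ω` in `G - Z k`. Each vertex then lies in only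
finitely many `S n`, because once it lies in `Z n` it is missed by `S n ⊆ C(Z n, ω)`;
so a finite `X` meets only finitely many `S n`, and `x n` eventually lives in `C(X, ω)`. -/

open Filter

section Diagonal

variable {α : Type*}

noncomputable def diagonalFinset (step : ℕ → Finset α → ℕ → α) (n : ℕ) : Finset α :=
  (Finset.range n).attach.biUnion fun k =>
    (Finset.range n).image (step k (diagonalFinset step k))
termination_by n
decreasing_by exact Finset.mem_range.mp k.2

lemma step_mem_diagonalFinset (step : ℕ → Finset α → ℕ → α) {k j n : ℕ} (hk : k < n)
    (hj : j < n) : step k (diagonalFinset step k) j ∈ diagonalFinset step n := by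
  rw [diagonalFinset]
  simp only [Finset.mem_biUnion, Finset.mem_attach, Finset.mem_image, Finset.mem_range,
    true_and, Subtype.exists]
  exact ⟨k, hk, j, hj, rfl⟩

lemma eventually_forall_notMem_of_diagonalFinset {step : ℕ → Finset α → ℕ → α}
    (hstep : ∀ n j, step n (diagonalFinset step n) j ∉ diagonalFinset step n)
    (X : Finset α) : ∀ᶠ n in atTop, ∀ j, step n (diagonalFinset step n) j ∉ X := by
  suffices ∀ w, ∀ᶠ n in atTop, ∀ j, step n (diagonalFinset step n) j ≠ w by
    filter_upwards [(eventually_all_finset X).mpr fun w _ => this w] with n hn j hj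
    exact hn _ hj j rfl
  intro w
  by_cases hw : ∃ k j, step k (diagonalFinset step k) j = w
  · obtain ⟨k, j, rfl⟩ := hw
    filter_upwards [eventually_gt_atTop (max k j)] with n hn i hi
    exact hstep n i (hi ▸ step_mem_diagonalFinset step ((le_max_left k j).trans_lt hn)
      ((le_max_right k j).trans_lt hn))
  · exact Eventually.of_forall fun n j hj => hw ⟨n, j, hj⟩

end Diagonal

namespace SimpleGraph

variable {G : SimpleGraph V} {K : Set V}

lemma componentComplMk_eq_of_walk {u v : V} (p : G.Walk u v) (hp : ∀ x ∈ p.support, x ∉ K) :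
    G.componentComplMk (hp u p.start_mem_support) =
      G.componentComplMk (hp v p.end_mem_support) :=
  ConnectedComponent.sound (p.induce Kᶜ hp).reachable

lemma ComponentCompl.exists_walk_support_subset {C : G.ComponentCompl K} {u v : V}
    (hu : u ∈ C) (hv : v ∈ C) : ∃ p : G.Walk u v, ∀ x ∈ p.support, x ∈ C := by
  obtain ⟨huK, rfl⟩ := hu
  obtain ⟨hvK, hvC⟩ := hv
  obtain ⟨q⟩ := ConnectedComponent.exact hvC.symm
  have hq : ∀ x ∈ (q.map (Embedding.induce Kᶜ).toHom).support, x ∈ G.componentComplMk huK := by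
    simp only [Walk.support_map, List.mem_map]
    rintro _ ⟨w, hw, rfl⟩
    exact ⟨w.2, ConnectedComponent.sound (q.takeUntil w hw).reachable.symm⟩
  exact ⟨_, hq⟩

end SimpleGraph

namespace Ray

variable {G : SimpleGraph V}

lemma exists_forall_ge_notMem (R : Ray G) {K : Set V} (hK : K.Finite) :
    ∃ N, ∀ n, N ≤ n → R.f n ∉ K := by
  have h := R.inj.tendsto_cofinite.eventually hK.eventually_cofinite_notMem
  rwa [Nat.cofinite_eq_atTop, eventually_atTop] at h

lemma mem_componentComplMk (R : Ray G) {K : Set V} {N : ℕ} (hN : ∀ n, N ≤ n → R.f n ∉ K)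
    {n : ℕ} (hn : N ≤ n) : R.f n ∈ G.componentComplMk (hN N le_rfl) := by
  induction n, hn using Nat.le_induction with
  | base => exact G.componentComplMk_mem _
  | succ n hn ih => exact ComponentCompl.mem_of_adj _ _ ih (hN (n + 1) (by omega)) (R.adj n)

lemma exists_tailIn (R : Ray G) (X : Finset V) :
    ∃ C : G.ComponentCompl (X : Set V), R.TailIn C := by
  obtain ⟨N, hN⟩ := R.exists_forall_ge_notMem X.finite_toSet
  exact ⟨_, N, fun _ => R.mem_componentComplMk hN⟩

lemma TailIn.eq {R : Ray G} {C D : G.ComponentCompl K} (hC : R.TailIn C) (hD : R.TailIn D) :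
    C = D := by
  obtain ⟨N₁, h₁⟩ := hC
  obtain ⟨N₂, h₂⟩ := hD
  obtain ⟨_, hC⟩ := h₁ (max N₁ N₂) (le_max_left _ _)
  obtain ⟨_, hD⟩ := h₂ (max N₁ N₂) (le_max_right _ _)
  exact hC.symm.trans hD

lemma componentComplMk_eq_of_tailIn (R : Ray G) {N : ℕ} (hN : ∀ n, N ≤ n → R.f n ∉ K)
    {C : G.ComponentCompl K} (hC : R.TailIn C) : G.componentComplMk (hN N le_rfl) = C :=
  TailIn.eq ⟨N, fun _ => R.mem_componentComplMk hN⟩ hC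

lemma rayEquiv_self (R : Ray G) : RayEquiv G R R := fun X => by
  obtain ⟨C, hC⟩ := R.exists_tailIn X
  exact ⟨C, hC, hC⟩

end Ray

namespace Ends

variable {G : SimpleGraph V}

noncomputable def ray (a : Ends G) : Ray G := a.2.choose

lemma ray_mem (a : Ends G) : a.ray ∈ a.1 := by
  rw [a.2.choose_spec]
  exact a.ray.rayEquiv_self

/-- The component `C(X, a)` of `G - X` in which the end `a` lives. -/
noncomputable def component (a : Ends G) (X : Finset V) : G.ComponentCompl (X : Set V) :=
  (a.ray.exists_tailIn X).choose

lemma tailIn_component {a : Ends G} {R : Ray G} (hR : R ∈ a.1) (X : Finset V) :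
    R.TailIn (a.component X) := by
  rw [a.2.choose_spec] at hR
  obtain ⟨C, haC, hRC⟩ := hR X
  rwa [haC.eq (a.ray.exists_tailIn X).choose_spec] at hRC

lemma livesIn_iff {a : Ends G} {X : Finset V} {C : G.ComponentCompl (X : Set V)} :
    LivesIn a X C ↔ a.component X = C :=
  ⟨fun h => (tailIn_component a.ray_mem X).eq (h _ a.ray_mem),
    by rintro rfl R hR; exact tailIn_component hR X⟩

lemma mem_basicSet_iff {a : Ends G} {X : Finset V} {C : G.ComponentCompl (X : Set V)} :
    a ∈ basicSet G X C ↔ a.component X = C :=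
  livesIn_iff

lemma isOpen_basicSet (X : Finset V) (C : G.ComponentCompl (X : Set V)) :
    IsOpen (basicSet G X C) :=
  TopologicalSpace.isOpen_generateFrom_of_mem ⟨X, C, rfl⟩

lemma exists_mem_component_eq_of_mem_closure {A : Set (Ends G)} {ω : Ends G}
    (h : ω ∈ closure A) (Z : Finset V) : ∃ a ∈ A, a.component Z = ω.component Z := by
  obtain ⟨a, haZ, haA⟩ :=
    mem_closure_iff.mp h _ (isOpen_basicSet Z _) (mem_basicSet_iff.mpr rfl)
  exact ⟨a, haA, mem_basicSet_iff.mp haZ⟩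

lemma exists_seq_in_component_meeting_separators {a ω : Ends G} {Z : Finset V}
    (h : a.component Z = ω.component Z) :
    ∃ d : ℕ → V, (∀ j, d j ∈ ω.component Z) ∧
      ∀ X : Finset V, (∀ j, d j ∉ (X : Set V)) → a.component X = ω.component X := by
  obtain ⟨N₁, h₁⟩ := tailIn_component ω.ray_mem Z
  obtain ⟨N₂, h₂⟩ := h ▸ tailIn_component a.ray_mem Z
  obtain ⟨p, hp⟩ := ComponentCompl.exists_walk_support_subset (h₁ N₁ le_rfl) (h₂ N₂ le_rfl)
  set S := ω.ray.f '' Set.Ici N₁ ∪ a.ray.f '' Set.Ici N₂ ∪ {x | x ∈ p.support}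
  have hS : S.Countable :=
    (((Set.to_countable _).image _).union ((Set.to_countable _).image _)).union
      (List.finite_toSet _).countable
  have hSC : S ⊆ ω.component Z := by
    rintro x ((⟨n, hn, rfl⟩ | ⟨n, hn, rfl⟩) | hx)
    exacts [h₁ n hn, h₂ n hn, hp x hx]
  obtain ⟨d, hd⟩ := hS.exists_eq_range ⟨_, Or.inr p.start_mem_support⟩
  refine ⟨d, fun j => hSC (hd ▸ ⟨j, rfl⟩), fun X hX => ?_⟩
  have hSX : ∀ x ∈ S, x ∉ (X : Set V) := by
    rintro x hx
    obtain ⟨j, rfl⟩ := hd ▸ hx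
    exact hX j
  have hω : G.componentComplMk _ = ω.component X :=
    ω.ray.componentComplMk_eq_of_tailIn (N := N₁) (fun n hn => hSX _ (.inl (.inl ⟨n, hn, rfl⟩)))
      (tailIn_component ω.ray_mem X)
  have ha : G.componentComplMk _ = a.component X :=
    a.ray.componentComplMk_eq_of_tailIn (N := N₂) (fun n hn => hSX _ (.inl (.inr ⟨n, hn, rfl⟩)))
      (tailIn_component a.ray_mem X)
  rw [← hω, ← ha]
  exact (componentComplMk_eq_of_walk p fun x hx => hSX x (.inr hx)).symm

end Ends

/-- End spaces of graphs are strong Fréchet–Urysohn. -/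
theorem stmt_7 {V : Type u} (G : SimpleGraph V) (A : ℕ → Set (Ends G))
    (ω : Ends G) (h : ∀ n, ω ∈ closure (A n)) :
    ∃ x : ℕ → Ends G, (∀ n, x n ∈ A n) ∧
      Filter.Tendsto x Filter.atTop (nhds ω) := by
  have hstep : ∀ n (Z : Finset V), ∃ a ∈ A n, ∃ d : ℕ → V, (∀ j, d j ∈ ω.component Z) ∧
      ∀ X : Finset V, (∀ j, d j ∉ (X : Set V)) → a.component X = ω.component X := fun n Z => by
    obtain ⟨a, haA, ha⟩ := Ends.exists_mem_component_eq_of_mem_closure (h n) Z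
    exact ⟨a, haA, Ends.exists_seq_in_component_meeting_separators ha⟩
  choose x hxA d hd hx using hstep
  set Z := diagonalFinset d
  refine ⟨fun n => x n (Z n), fun n => hxA n _, ?_⟩
  refine TopologicalSpace.tendsto_nhds_generateFrom_iff.mpr ?_
  rintro _ ⟨X, C, rfl⟩ hω
  filter_upwards [eventually_forall_notMem_of_diagonalFinset
    (fun n j => ComponentCompl.notMem_of_mem (hd n (Z n) j)) X] with n hn
  rw [Set.mem_preimage, Ends.mem_basicSet_iff, hx n _ X hn, ← Ends.mem_basicSet_iff]
  exact hω
end
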